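/- Let B be an n×n real symmetric positive definite matrix with simple eigenvalues μ_1 > μ_2 > ... > μ_n > 0 and corresponding orthonormal eigenvectors x_1, ..., x_n. Fix an index i and let x = c_i x_i + c_{i+1} x_{i+1} with c_i ≠ 0 and c_{i+1} ≠ 0. Suppose w ∈ ℝⁿ is nonzero and satisfies (B + αI)w = Bx for some real α > −μ_i, and suppose μ(w) > μ(x). Then w ∈ span{x_i, x_{i+1}}. -/

import Mathlib

/-!
Expand `w = ∑ d_k x_k` and `x = ∑ c_k x_k` in the eigenbasis. The equation `(B + αI)w = Bx` reads
`d_k (μ_k + α) = c_k μ_k`, so outside `{i, i+1}` only the coordinate at the one index `j` with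
`μ_j = -α` can survive, and `α > -μ_i` puts `j` beyond `i + 1`. On `{i, i+1}` solving multiplies
`c_k` by `μ_k / (μ_k - μ_j)`, which grows as `μ_k` decreases because `μ_j > 0`; so it shifts weight
towards the smaller eigenvalue `μ_{i+1}` and cannot raise the Rayleigh quotient above `μ(x)`, and a
nonzero `x_j` component, with `μ_j < μ_{i+1}`, only lowers it further.
-/

noncomputable section

/-- Real matrix-vector multiplication viewed as a map on `EuclideanSpace`. -/
def mulVecEr {n : ℕ} (M : Matrix (Fin n) (Fin n) ℝ) (x : EuclideanSpace ℝ (Fin n)) :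
    EuclideanSpace ℝ (Fin n) :=
  (WithLp.equiv 2 (Fin n → ℝ)).symm (M.mulVec (WithLp.equiv 2 (Fin n → ℝ) x))

/-- The Rayleigh quotient `μ(x) = (x,Bx)/(x,x)`. -/
def RQr {n : ℕ} (B : Matrix (Fin n) (Fin n) ℝ) (x : EuclideanSpace ℝ (Fin n)) : ℝ :=
  (inner ℝ x (mulVecEr B x) : ℝ) / ‖x‖ ^ 2

open scoped RealInnerProductSpace

section Eigenbasis

variable {ι E : Type*} [Fintype ι] [NormedAddCommGroup E] [InnerProductSpace ℝ E]
  (b : OrthonormalBasis ι ℝ E) {T : E →ₗ[ℝ] E} {μ : ι → ℝ}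

theorem OrthonormalBasis.inner_map_eq_of_apply_eq_smul (hT : ∀ k, T (b k) = μ k • b k)
    (k : ι) (v : E) : ⟪b k, T v⟫ = μ k * ⟪b k, v⟫ := by
  classical
  conv_lhs => rw [← b.sum_repr' v]
  simp only [map_sum, map_smul, hT, smul_smul, inner_sum, inner_smul_right, b.inner_eq_ite,
    mul_ite, mul_one, mul_zero, Finset.sum_ite_eq, Finset.mem_univ, ↓reduceIte]
  ring

theorem OrthonormalBasis.inner_map_self_eq_sum (hT : ∀ k, T (b k) = μ k • b k) (v : E) :
    ⟪v, T v⟫ = ∑ k, μ k * ⟪b k, v⟫ ^ 2 := by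
  rw [← b.sum_inner_mul_inner]
  refine Finset.sum_congr rfl fun k _ => ?_
  rw [b.inner_map_eq_of_apply_eq_smul hT, real_inner_comm]
  ring

theorem OrthonormalBasis.mem_span_image_of_inner_eq_zero {s : Set ι} {v : E}
    (hv : ∀ k ∉ s, ⟪b k, v⟫ = 0) : v ∈ Submodule.span ℝ (b '' s) := by
  rw [← b.sum_repr' v]
  refine Submodule.sum_mem _ fun k _ => ?_
  by_cases hk : k ∈ s
  · exact Submodule.smul_mem _ _ (Submodule.subset_span (Set.mem_image_of_mem b hk))
  · rw [hv k hk, zero_smul]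
    exact Submodule.zero_mem _

end Eigenbasis

theorem Fintype.sum_eq_add_add {ι M : Type*} [Fintype ι] [DecidableEq ι] [AddCommMonoid M]
    {f : ι → M} {a b c : ι} (hab : a ≠ b) (hac : a ≠ c) (hbc : b ≠ c)
    (hf : ∀ k, k ≠ a → k ≠ b → k ≠ c → f k = 0) : ∑ k, f k = f a + f b + f c := by
  rw [← Finset.sum_subset (Finset.subset_univ {a, b, c})
      fun k _ hk => hf k (by grind) (by grind) (by grind),
    Finset.sum_insert (by simp [hab, hac]), Finset.sum_pair hbc, add_assoc]

theorem div_sub_le_div_sub_of_le {l a b : ℝ} (hl : 0 ≤ l) (hlb : l < b) (hba : b ≤ a) :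
    a / (a - l) ≤ b / (b - l) := by
  rw [div_le_div_iff₀ (by linarith) (by linarith)]
  nlinarith

theorem three_term_rayleigh_le {μ₁ μ₂ l c₁ c₂ d₁ d₂ t : ℝ} (hl : 0 ≤ l) (hl₂ : l < μ₂)
    (h₂₁ : μ₂ ≤ μ₁) (hd₁ : d₁ * (μ₁ - l) = c₁ * μ₁) (hd₂ : d₂ * (μ₂ - l) = c₂ * μ₂) :
    (μ₁ * d₁ ^ 2 + μ₂ * d₂ ^ 2 + l * t ^ 2) * (c₁ ^ 2 + c₂ ^ 2) ≤
      (μ₁ * c₁ ^ 2 + μ₂ * c₂ ^ 2) * (d₁ ^ 2 + d₂ ^ 2 + t ^ 2) := by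
  have hd₁' : d₁ = c₁ * (μ₁ / (μ₁ - l)) := by
    rw [mul_div_assoc', eq_div_iff (by linarith), hd₁]
  have hd₂' : d₂ = c₂ * (μ₂ / (μ₂ - l)) := by
    rw [mul_div_assoc', eq_div_iff (by linarith), hd₂]
  have hg := div_sub_le_div_sub_of_le hl hl₂ h₂₁
  have hg₀ : 0 ≤ μ₁ / (μ₁ - l) := div_nonneg (by linarith) (by linarith)
  have hratio : c₂ ^ 2 * d₁ ^ 2 ≤ c₁ ^ 2 * d₂ ^ 2 := by
    calc c₂ ^ 2 * d₁ ^ 2 = c₁ ^ 2 * c₂ ^ 2 * (μ₁ / (μ₁ - l)) ^ 2 := by rw [hd₁']; ring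
      _ ≤ c₁ ^ 2 * c₂ ^ 2 * (μ₂ / (μ₂ - l)) ^ 2 := by gcongr
      _ = c₁ ^ 2 * d₂ ^ 2 := by rw [hd₂']; ring
  nlinarith [mul_nonneg (sq_nonneg t) (sq_nonneg c₁), mul_nonneg (sq_nonneg t) (sq_nonneg c₂)]

theorem coeff_eq_zero_of_rayleigh_lt {ι : Type*} [Fintype ι] [LinearOrder ι]
    {μ : ι → ℝ} (hμ : StrictAnti μ) (hpos : ∀ k, 0 < μ k) {i i' : ι} (hii' : i ⋖ i')
    {c d : ι → ℝ} (hc : ∀ k, k ≠ i → k ≠ i' → c k = 0) (hci : c i ≠ 0)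
    {α : ℝ} (hα : -μ i < α) (hd : ∀ k, d k * (μ k + α) = c k * μ k)
    (hlt : (∑ k, μ k * c k ^ 2) / ∑ k, c k ^ 2 < (∑ k, μ k * d k ^ 2) / ∑ k, d k ^ 2) :
    ∀ k, k ≠ i → k ≠ i' → d k = 0 := by
  intro j hji hji'
  by_contra hdj
  have hαj : α = -μ j := by
    have h := hd j
    rw [hc j hji hji', zero_mul] at h
    linarith [(mul_eq_zero.mp h).resolve_left hdj]
  subst hαj
  have hi'j : i' < j :=
    lt_of_le_of_ne (hii'.ge_of_gt (hμ.lt_iff_gt.mp (by linarith))) (Ne.symm hji')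
  have hd₀ : ∀ k, k ≠ i → k ≠ i' → k ≠ j → d k = 0 := fun k hki hki' hkj => by
    have h := hd k
    rw [hc k hki hki', zero_mul] at h
    refine (mul_eq_zero.mp h).resolve_right fun h' => hkj (hμ.injective ?_)
    linarith
  have hij : i ≠ j := (hii'.lt.trans hi'j).ne
  have hsc₁ : ∑ k, μ k * c k ^ 2 = μ i * c i ^ 2 + μ i' * c i' ^ 2 :=
    Fintype.sum_eq_add i i' hii'.lt.ne fun k hk => by simp [hc k hk.1 hk.2]
  have hsc₀ : ∑ k, c k ^ 2 = c i ^ 2 + c i' ^ 2 :=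
    Fintype.sum_eq_add i i' hii'.lt.ne fun k hk => by simp [hc k hk.1 hk.2]
  have hsd₁ : ∑ k, μ k * d k ^ 2 = μ i * d i ^ 2 + μ i' * d i' ^ 2 + μ j * d j ^ 2 :=
    Fintype.sum_eq_add_add hii'.lt.ne hij hi'j.ne fun k h₁ h₂ h₃ => by simp [hd₀ k h₁ h₂ h₃]
  have hsd₀ : ∑ k, d k ^ 2 = d i ^ 2 + d i' ^ 2 + d j ^ 2 :=
    Fintype.sum_eq_add_add hii'.lt.ne hij hi'j.ne fun k h₁ h₂ h₃ => by simp [hd₀ k h₁ h₂ h₃]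
  rw [hsc₁, hsc₀, hsd₁, hsd₀, div_lt_div_iff₀ (by positivity) (by positivity)] at hlt
  have := three_term_rayleigh_le (c₁ := c i) (c₂ := c i') (d₁ := d i) (d₂ := d i') (t := d j)
    (hpos j).le (hμ hi'j) (hμ hii'.lt).le (by linear_combination hd i) (by linear_combination hd i')
  linarith

theorem Fin.covBy_mk_add_one {n : ℕ} (i : Fin n) (hi : (i : ℕ) + 1 < n) :
    i ⋖ ⟨(i : ℕ) + 1, hi⟩ := by
  refine ⟨Fin.lt_def.2 (Nat.lt_succ_self _), fun k h₁ h₂ => ?_⟩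
  rw [Fin.lt_def] at h₁ h₂
  change (k : ℕ) < i + 1 at h₂
  omega

theorem mulVecEr_add_smul_one {n : ℕ} (B : Matrix (Fin n) (Fin n) ℝ) (α : ℝ)
    (w : EuclideanSpace ℝ (Fin n)) :
    mulVecEr (B + α • (1 : Matrix (Fin n) (Fin n) ℝ)) w = mulVecEr B w + α • w := by
  simp only [mulVecEr, Matrix.add_mulVec, Matrix.smul_mulVec, Matrix.one_mulVec]
  rfl

section EuclideanSpace

variable {n : ℕ} {B : Matrix (Fin n) (Fin n) ℝ}
  (b : OrthonormalBasis (Fin n) ℝ (EuclideanSpace ℝ (Fin n))) {μ : Fin n → ℝ}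

theorem OrthonormalBasis.inner_mulVecEr_eq (hb : ∀ k, mulVecEr B (b k) = μ k • b k)
    (k : Fin n) (v : EuclideanSpace ℝ (Fin n)) : ⟪b k, mulVecEr B v⟫ = μ k * ⟪b k, v⟫ :=
  -- `mulVecEr B` is definitionally the linear map `Matrix.toLpLin 2 2 B`.
  b.inner_map_eq_of_apply_eq_smul (T := Matrix.toLpLin 2 2 B) hb k v

theorem OrthonormalBasis.RQr_eq_sum (hb : ∀ k, mulVecEr B (b k) = μ k • b k)
    (v : EuclideanSpace ℝ (Fin n)) :
    RQr B v = (∑ k, μ k * ⟪b k, v⟫ ^ 2) / ∑ k, ⟪b k, v⟫ ^ 2 := by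
  rw [RQr, ← b.sum_sq_inner_right]
  exact congrArg (· / _) (b.inner_map_self_eq_sum (T := Matrix.toLpLin 2 2 B) hb v)

end EuclideanSpace

theorem shifted_solution_stays_in_invariant_subspace_general
    {n : ℕ} (B : Matrix (Fin n) (Fin n) ℝ)
    (μs : Fin n → ℝ) (hdec : StrictAnti μs) (hpos : ∀ k, 0 < μs k)
    (xs : Fin n → EuclideanSpace ℝ (Fin n)) (hon : Orthonormal ℝ xs)
    (heig : ∀ k, mulVecEr B (xs k) = μs k • xs k)
    (i : Fin n) (hi : (i : ℕ) + 1 < n)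
    (ci ci1 : ℝ) (hci : ci ≠ 0)
    (x : EuclideanSpace ℝ (Fin n))
    (hx : x = ci • xs i + ci1 • xs ⟨(i : ℕ) + 1, hi⟩)
    (w : EuclideanSpace ℝ (Fin n))
    (α : ℝ) (hα : -μs i < α)
    (hw : mulVecEr (B + α • (1 : Matrix (Fin n) (Fin n) ℝ)) w = mulVecEr B x)
    (hμw : RQr B x < RQr B w) :
    w ∈ Submodule.span ℝ {xs i, xs ⟨(i : ℕ) + 1, hi⟩} := by
  set i' : Fin n := ⟨(i : ℕ) + 1, hi⟩
  have hii' : i ⋖ i' := Fin.covBy_mk_add_one i hi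
  let b := OrthonormalBasis.mk hon
    (hon.linearIndependent.span_eq_top_of_card_eq_finrank' (by simp)).ge
  have hb : ⇑b = xs := OrthonormalBasis.coe_mk _ _
  have hbB : ∀ k, mulVecEr B (b k) = μs k • b k := by rw [hb]; exact heig
  have hcoeff : ∀ k, ⟪b k, w⟫ * (μs k + α) = ⟪b k, x⟫ * μs k := fun k => by
    have h := congrArg (⟪b k, ·⟫) hw
    simp only [mulVecEr_add_smul_one, inner_add_right, inner_smul_right,
      b.inner_mulVecEr_eq hbB] at h
    linear_combination h
  have hx_coeff : ∀ k, k ≠ i → k ≠ i' → ⟪b k, x⟫ = 0 := fun k hki hki' => by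
    simp [hx, hb, inner_add_right, inner_smul_right, hon.inner_eq_zero hki,
      hon.inner_eq_zero hki']
  have hx_i : ⟪b i, x⟫ = ci := by
    simp [hx, hb, inner_add_right, inner_smul_right, hon.inner_eq_zero hii'.lt.ne, hon.1]
  rw [b.RQr_eq_sum hbB, b.RQr_eq_sum hbB] at hμw
  have hw_coeff := coeff_eq_zero_of_rayleigh_lt hdec hpos hii' hx_coeff
    (hx_i ▸ hci) hα hcoeff hμw
  rw [← hb, ← Set.image_pair]
  exact b.mem_span_image_of_inner_eq_zero fun k hk => hw_coeff k (hk ∘ .inl) (hk ∘ .inr)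

/-- If `x ∈ span{x_i, x_{i+1}}` (with nonzero coefficients), `(B + αI)w = Bx` for some
`α > -μ_i`, and `μ(w) > μ(x)`, then `w ∈ span{x_i, x_{i+1}}`. -/
theorem shifted_solution_stays_in_invariant_subspace
    {n : ℕ} (B : Matrix (Fin n) (Fin n) ℝ) (hB : B.PosDef)
    (μs : Fin n → ℝ) (hdec : StrictAnti μs) (hpos : ∀ k, 0 < μs k)
    (xs : Fin n → EuclideanSpace ℝ (Fin n)) (hon : Orthonormal ℝ xs)
    (heig : ∀ k, mulVecEr B (xs k) = μs k • xs k)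
    (i : Fin n) (hi : (i : ℕ) + 1 < n)
    (ci ci1 : ℝ) (hci : ci ≠ 0) (hci1 : ci1 ≠ 0)
    (x : EuclideanSpace ℝ (Fin n))
    (hx : x = ci • xs i + ci1 • xs ⟨(i : ℕ) + 1, hi⟩)
    (w : EuclideanSpace ℝ (Fin n)) (hw0 : w ≠ 0)
    (α : ℝ) (hα : -μs i < α)
    (hw : mulVecEr (B + α • (1 : Matrix (Fin n) (Fin n) ℝ)) w = mulVecEr B x)
    (hμw : RQr B x < RQr B w) :
    w ∈ Submodule.span ℝ {xs i, xs ⟨(i : ℕ) + 1, hi⟩} :=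
  shifted_solution_stays_in_invariant_subspace_general B μs hdec hpos xs hon heig i hi ci ci1 hci x
    hx w α hα hw hμw
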